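/- arXiv:1510.02462 — 4 statements merged into one kernel-verified Lean document; each statement's English description precedes it below -/
import Mathlib

section
/- With the setup of θ-sparse observability (every subset of p−θ sensor blocks determines the state uniquely), and assuming the system is θ-sparse observable but not (θ+1)-sparse observable, there exist distinct states x₁ ≠ x₂ such that the observation vectors (O_1 x₁, …, O_p x₁) and (O_1 x₂, …, O_p x₂) agree on exactly p−θ−1 coordinates, i.e., the minimum symbol Hamming distance of the observation code equals exactly θ+1. -/
open Matrix

/-- The sensor system `O` is `θ`-sparse observable: every subset of `p - θ`
sensor blocks yields an injective stacked map (trivial kernel). -/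
def SparseObservable {n p : ℕ} (O : Fin p → Matrix (Fin n) (Fin n) ℝ) (θ : ℕ) : Prop :=
  ∀ s : Finset (Fin p), s.card = p - θ →
    ∀ x : Fin n → ℝ, (∀ i ∈ s, O i *ᵥ x = 0) → x = 0

open Classical in
theorem min_hamming_distance_eq_of_exactly_sparse_observable {n p θ : ℕ}
    (hθ : θ + 1 ≤ p)
    (O : Fin p → Matrix (Fin n) (Fin n) ℝ)
    (hobs : SparseObservable O θ)
    (hnot : ∃ s : Finset (Fin p), s.card = p - (θ + 1) ∧
      ∃ x : Fin n → ℝ, x ≠ 0 ∧ ∀ i ∈ s, O i *ᵥ x = 0) :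
    ∃ x₁ x₂ : Fin n → ℝ, x₁ ≠ x₂ ∧
      (Finset.univ.filter fun i => O i *ᵥ x₁ ≠ O i *ᵥ x₂).card = θ + 1 := by
  obtain ⟨s, hs, x, hx, hxs⟩ := hnot
  refine ⟨x, 0, hx, ?_⟩
  set T := Finset.univ.filter (fun i => O i *ᵥ x = 0) with hT
  have hsT : s ⊆ T := fun i hi => by simp [hT, hxs i hi]
  have hTub : T.card ≤ p - θ - 1 := by
    by_contra h
    push_neg at h
    have hle : p - θ ≤ T.card := by omega
    obtain ⟨t, hts, htc⟩ := T.exists_subset_card_eq hle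
    exact hx (hobs t htc x (fun i hi => by
      have := hts hi
      simpa [hT] using this))
  have hTlb : p - θ - 1 ≤ T.card := by
    have := Finset.card_le_card hsT
    omega
  have hTcard : T.card = p - θ - 1 := le_antisymm hTub hTlb
  have hsplit : T.card + (Finset.univ.filter fun i => ¬ (O i *ᵥ x = 0)).card = p := by
    rw [hT, Finset.card_filter_add_card_filter_not]
    simp
  have : (Finset.univ.filter fun i => O i *ᵥ x ≠ O i *ᵥ (0 : Fin n → ℝ)).card
      = (Finset.univ.filter fun i => ¬ (O i *ᵥ x = 0)).card := by
    congr 1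
    apply Finset.filter_congr
    intro i _
    simp [Matrix.mulVec_zero]
  rw [this]
  omega
end

section
/- Suppose the sensor system given by O_1, …, O_p (O_i ∈ ℝ^{n×n}) is 2k-sparse observable, i.e., for every subset s ⊆ {1,…,p} with |s| = p−2k, the stacked matrix O_s is injective. Then exact recovery despite k corrupted sensors is possible: for any states x₁, x₂ and attack vectors a₁, a₂ (each a_j = (a_{j,1},…,a_{j,p}) with a_{j,i} ∈ ℝⁿ supported on at most k sensor indices), if O_i x₁ + a_{1,i} = O_i x₂ + a_{2,i} for all i, then x₁ = x₂. -/
open Matrix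

open Classical in
theorem exact_recovery_of_two_k_sparse_observable {n p k : ℕ} (hk : 2 * k < p)
    (O : Fin p → Matrix (Fin n) (Fin n) ℝ)
    (hobs : SparseObservable O (2 * k))
    (x₁ x₂ : Fin n → ℝ) (a₁ a₂ : Fin p → Fin n → ℝ)
    (ha₁ : (Finset.univ.filter fun i => a₁ i ≠ 0).card ≤ k)
    (ha₂ : (Finset.univ.filter fun i => a₂ i ≠ 0).card ≤ k)
    (hobs_eq : ∀ i, O i *ᵥ x₁ + a₁ i = O i *ᵥ x₂ + a₂ i) :
    x₁ = x₂ := by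
  set S₁ := Finset.univ.filter fun i => a₁ i ≠ 0 with hS₁
  set S₂ := Finset.univ.filter fun i => a₂ i ≠ 0 with hS₂
  have hcard : (S₁ ∪ S₂)ᶜ.card ≥ p - 2 * k := by
    have h1 : (S₁ ∪ S₂).card ≤ 2 * k := by
      calc (S₁ ∪ S₂).card ≤ S₁.card + S₂.card := Finset.card_union_le _ _
        _ ≤ 2 * k := by omega
    have := Finset.card_compl (S₁ ∪ S₂)
    simp only [Fintype.card_fin] at this
    omega
  obtain ⟨t, hts, htc⟩ := Finset.exists_subset_card_eq hcard
  have key : x₁ - x₂ = 0 := by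
    refine hobs t htc _ (fun i hi => ?_)
    have hi' := hts hi
    simp only [Finset.mem_compl, Finset.mem_union, hS₁, hS₂, Finset.mem_filter,
      Finset.mem_univ, true_and, not_or, not_not] at hi'
    have h := hobs_eq i
    rw [hi'.1, hi'.2] at h
    simp only [add_zero] at h
    rw [Matrix.mulVec_sub, h, sub_self]
  funext j
  have := congrFun key j
  simp only [Pi.sub_apply, Pi.zero_apply, sub_eq_zero] at this
  exact this
end

section
/- Conversely, if the sensor system given by O_1, …, O_p is NOT 2k-sparse observable, then there exist distinct states x₁ ≠ x₂ and attack vectors a₁, a₂ each supported on at most k sensors such that O_i x₁ + a_{1,i} = O_i x₂ + a_{2,i} for all i ∈ {1,…,p}; hence exact state recovery against a k-adversary is impossible. -/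
open Matrix

open Classical in
theorem recovery_impossible_of_not_two_k_sparse_observable {n p k : ℕ} (hk : 2 * k < p)
    (O : Fin p → Matrix (Fin n) (Fin n) ℝ)
    (hnot : ¬ SparseObservable O (2 * k)) :
    ∃ (x₁ x₂ : Fin n → ℝ) (a₁ a₂ : Fin p → Fin n → ℝ),
      x₁ ≠ x₂ ∧
      (Finset.univ.filter fun i => a₁ i ≠ 0).card ≤ k ∧
      (Finset.univ.filter fun i => a₂ i ≠ 0).card ≤ k ∧
      ∀ i, O i *ᵥ x₁ + a₁ i = O i *ᵥ x₂ + a₂ i := by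
  simp only [SparseObservable, not_forall] at hnot
  obtain ⟨s, hs, x, hx, hxne⟩ := hnot
  have hsc : sᶜ.card = 2 * k := by
    have h1 : s.card + sᶜ.card = p := by
      rw [Finset.card_add_card_compl, Fintype.card_fin]
    omega
  obtain ⟨A, hA, hAcard⟩ : ∃ A ⊆ sᶜ, A.card = k :=
    Finset.exists_subset_card_eq (by omega)
  set B := sᶜ \ A with hB
  have hBcard : B.card = k := by
    rw [hB, Finset.card_sdiff_of_subset hA, hsc, hAcard]; omega
  refine ⟨x, 0, (fun i => if i ∈ A then -(O i *ᵥ x) else 0),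
    (fun i => if i ∈ B then O i *ᵥ x else 0), hxne, ?_, ?_, ?_⟩
  · calc (Finset.univ.filter fun i => (if i ∈ A then -(O i *ᵥ x) else 0) ≠ 0).card
        ≤ A.card := by
          apply Finset.card_le_card
          intro i hi
          simp only [Finset.mem_filter] at hi
          by_contra h
          simp [h] at hi
    _ ≤ k := by omega
  · calc (Finset.univ.filter fun i => (if i ∈ B then O i *ᵥ x else 0) ≠ 0).card
        ≤ B.card := by
          apply Finset.card_le_card
          intro i hi
          simp only [Finset.mem_filter] at hi
          by_contra h
          simp [h] at hi
    _ ≤ k := by omega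
  · intro i
    rw [mulVec_zero, zero_add]
    by_cases hiA : i ∈ A
    · have hiB : i ∉ B := by simp [hB, hiA]
      simp [hiA, hiB]
    · by_cases hiB : i ∈ B
      · simp [hiA, hiB]
      · have his : i ∈ s := by
          by_contra h
          exact hiB (Finset.mem_sdiff.mpr ⟨Finset.mem_compl.mpr h, hiA⟩)
        simp [hiA, hiB, hx i his]
end

section
/- Ambiguity construction for insufficient redundancy: suppose p = 5 sensors, the system is θ-sparse observable with θ = 3 but not 4-sparse observable, and k = 2. Then there exist distinct states x₁ ≠ x₂ and 2-sparse attack vectors a₁, a₂ (each nonzero on at most 2 sensor indices) such that the corrupted observations coincide: O_i x₁ + a_{1,i} = O_i x₂ + a_{2,i} for all i ∈ {1,…,5}. -/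
open Matrix

open Classical in
theorem ambiguity_example_five_sensors {n : ℕ}
    (O : Fin 5 → Matrix (Fin n) (Fin n) ℝ)
    (hobs : SparseObservable O 3)
    (hnot : ∃ s : Finset (Fin 5), s.card = 1 ∧
      ∃ x : Fin n → ℝ, x ≠ 0 ∧ ∀ i ∈ s, O i *ᵥ x = 0) :
    ∃ (x₁ x₂ : Fin n → ℝ) (a₁ a₂ : Fin 5 → Fin n → ℝ),
      x₁ ≠ x₂ ∧
      (Finset.univ.filter fun i => a₁ i ≠ 0).card ≤ 2 ∧
      (Finset.univ.filter fun i => a₂ i ≠ 0).card ≤ 2 ∧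
      ∀ i, O i *ᵥ x₁ + a₁ i = O i *ᵥ x₂ + a₂ i := by
  obtain ⟨s, hs, x, hx, hker⟩ := hnot
  obtain ⟨j, rfl⟩ := Finset.card_eq_one.mp hs
  have hOj : O j *ᵥ x = 0 := hker j (Finset.mem_singleton_self j)
  set L : Finset (Fin 5) := Finset.univ.erase j with hL
  have hLcard : L.card = 4 := by
    simp [hL, Finset.card_erase_of_mem]
  obtain ⟨T1, hT1L, hT1⟩ := Finset.exists_subset_card_eq (s := L) (n := 2) (by omega)
  set T2 : Finset (Fin 5) := L \ T1 with hT2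
  have hT2card : T2.card = 2 := by
    rw [hT2, Finset.card_sdiff_of_subset hT1L, hLcard, hT1]
  refine ⟨x, 0, (fun i => if i ∈ T2 then -(O i *ᵥ x) else 0),
    (fun i => if i ∈ T1 then O i *ᵥ x else 0), hx, ?_, ?_, ?_⟩
  · calc (Finset.univ.filter fun i => (if i ∈ T2 then -(O i *ᵥ x) else 0) ≠ 0).card
        ≤ T2.card := by
          apply Finset.card_le_card
          intro i hi
          simp only [Finset.mem_filter] at hi
          by_contra h
          simp [h] at hi
      _ ≤ 2 := le_of_eq hT2card
  · calc (Finset.univ.filter fun i => (if i ∈ T1 then O i *ᵥ x else 0) ≠ 0).card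
        ≤ T1.card := by
          apply Finset.card_le_card
          intro i hi
          simp only [Finset.mem_filter] at hi
          by_contra h
          simp [h] at hi
      _ ≤ 2 := le_of_eq hT1
  · intro i
    by_cases h2 : i ∈ T2
    · have h1 : i ∉ T1 := (Finset.mem_sdiff.mp h2).2
      simp [h1, h2]
    by_cases h1 : i ∈ T1
    · simp [h1, h2]
    · have hij : i = j := by
        by_contra hne
        have : i ∈ L := Finset.mem_erase.mpr ⟨hne, Finset.mem_univ i⟩
        exact h2 (Finset.mem_sdiff.mpr ⟨this, h1⟩)
      simp [h1, h2, hij, hOj]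
end
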